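/- Let S be a bounded, positive, self-adjoint operator on a complex Hilbert space H and let T be an unbounded self-adjoint operator on H such that ST ⊂ TS, i.e. for every x ∈ D(T), Sx ∈ D(T) and S(Tx) = T(Sx). Then S^{1/2} T ⊂ T S^{1/2}, i.e. for every x ∈ D(T), S^{1/2}x ∈ D(T) and S^{1/2}(Tx) = T(S^{1/2}x), where S^{1/2} is the positive square root of S. -/

import Mathlib

open LinearPMap

/-! The bounded operators `A` with `A T ⊂ T A` form a subalgebra, norm-closed since a self-adjoint
`T` has closed graph, and a *-subalgebra since `A T ⊂ T A` implies `A* T* ⊂ T* A*`. The continuous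
functional calculus of `S` stays inside every closed *-subalgebra containing `S`, and `S^{1/2}` is
`√·` applied to `S`. -/

variable {H : Type*} [NormedAddCommGroup H] [InnerProductSpace ℂ H] [CompleteSpace H]

namespace LinearPMap

section Commutant

variable {𝕜 E : Type*} [RCLike 𝕜] [NormedAddCommGroup E] [InnerProductSpace 𝕜 E]

/-- The bounded `A` with `A T ⊂ T A`, phrased as: `A × A` maps the graph of `T` into itself. -/
def commutant (T : E →ₗ.[𝕜] E) : Subalgebra 𝕜 (E →L[𝕜] E) where
  carrier := {A | ∀ p ∈ T.graph, (A p.1, A p.2) ∈ T.graph}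
  mul_mem' hA hB p hp := hA _ (hB p hp)
  add_mem' hA hB p hp := T.graph.add_mem (hA p hp) (hB p hp)
  algebraMap_mem' c p hp := by
    simpa [Algebra.algebraMap_eq_smul_one] using T.graph.smul_mem c hp

variable {T : E →ₗ.[𝕜] E} {A : E →L[𝕜] E}

theorem mem_commutant_iff :
    A ∈ T.commutant ↔ ∀ x : T.domain, ∃ hx : A x ∈ T.domain, A (T x) = T ⟨A x, hx⟩ := by
  constructor
  · intro hA x
    obtain ⟨y, hy, hTy⟩ := T.mem_graph_iff.mp (hA _ (T.mem_graph x))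
    obtain ⟨y, hy'⟩ := y
    subst hy
    exact ⟨hy', hTy.symm⟩
  · rintro hA ⟨_, _⟩ hp
    obtain ⟨x, rfl, rfl⟩ := T.mem_graph_iff.mp hp
    obtain ⟨hx, hAx⟩ := hA x
    simpa [hAx] using T.mem_graph ⟨A x, hx⟩

theorem isClosed_commutant (hT : T.IsClosed) :
    _root_.IsClosed (T.commutant : Set (E →L[𝕜] E)) := by
  have : (T.commutant : Set (E →L[𝕜] E)) =
      ⋂ p ∈ T.graph, (fun A : E →L[𝕜] E ↦ (A p.1, A p.2)) ⁻¹' T.graph := by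
    ext A
    simp [commutant]
  rw [this]
  exact isClosed_biInter fun p _ ↦ hT.preimage <|
    (ContinuousLinearMap.apply 𝕜 E p.1).continuous.prodMk
      (ContinuousLinearMap.apply 𝕜 E p.2).continuous

variable [CompleteSpace E]

theorem adjoint_mem_commutant_adjoint (hT : Dense (T.domain : Set E)) (hA : A ∈ T.commutant) :
    ContinuousLinearMap.adjoint A ∈ T†.commutant := by
  refine mem_commutant_iff.mpr fun y ↦ ?_
  have hinner : ∀ x : T.domain,
      inner 𝕜 (ContinuousLinearMap.adjoint A (T† y)) (x : E) =
        inner 𝕜 (ContinuousLinearMap.adjoint A y) (T x) := by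
    intro x
    obtain ⟨hx, hAx⟩ := mem_commutant_iff.mp hA x
    rw [ContinuousLinearMap.adjoint_inner_left, ContinuousLinearMap.adjoint_inner_left, hAx]
    exact adjoint_isFormalAdjoint hT y ⟨A x, hx⟩
  exact ⟨mem_adjoint_domain_of_exists _ ⟨_, hinner⟩, (adjoint_apply_eq hT _ hinner).symm⟩

theorem star_mem_commutant (hT : IsSelfAdjoint T) (hA : A ∈ T.commutant) :
    star A ∈ T.commutant := by
  have h := adjoint_mem_commutant_adjoint hT.dense_domain hA
  rwa [isSelfAdjoint_def.mp hT] at h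

end Commutant

theorem cfc_mem_commutant {T : H →ₗ.[ℂ] H} (hT : IsSelfAdjoint T) (f : ℝ → ℝ)
    {A : H →L[ℂ] H} (hA : A ∈ T.commutant) : cfc f A ∈ T.commutant := by
  let s : StarSubalgebra ℂ (H →L[ℂ] H) :=
    { T.commutant with star_mem' := star_mem_commutant hT }
  have : _root_.IsClosed (s : Set (H →L[ℂ] H)) := isClosed_commutant hT.isClosed
  exact cfc_mem (s := s) f hA

end LinearPMap

/-- If `S` is a bounded positive self-adjoint operator and `T` an unbounded self-adjoint
operator with `ST ⊂ TS`, then `S^{1/2}T ⊂ TS^{1/2}`, where `S^{1/2}` is the positive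
square root of `S`. -/
theorem sqrt_commutes (S : H →L[ℂ] H) (hS : S.IsPositive)
    (T : H →ₗ.[ℂ] H) (hT : IsSelfAdjoint T)
    (hST : ∀ x : T.domain, ∃ hx : S (x : H) ∈ T.domain, S (T x) = T ⟨S (x : H), hx⟩) :
    ∀ x : T.domain, ∃ hx : CFC.sqrt S (x : H) ∈ T.domain,
      CFC.sqrt S (T x) = T ⟨CFC.sqrt S (x : H), hx⟩ := by
  rw [← mem_commutant_iff, CFC.sqrt_eq_real_sqrt S (S.nonneg_iff_isPositive.mpr hS), cfcₙ_eq_cfc]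
  exact cfc_mem_commutant hT Real.sqrt (mem_commutant_iff.mpr hST)
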